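/- (Proposition 3.) Assume Δ = 0 and γ ≠ 4. Let λ₁, λ₂ ∈ K and set s₁' := s₁ ∘ τ(λ₁·c₁) and s₂' := s₂ ∘ τ(λ₂·c₂). Then for every n ≥ 1, (s₁' ∘ s₂')ⁿ = (s₁ ∘ s₂)ⁿ ∘ τ(B_n), where, writing u := u_α: if n is even, B_n = u(n)·((α·u(n)·λ₁ + u(n−1)·λ₂)·c₁ + α·(u(n+1)·λ₁ + u(n)·λ₂)·c₂), and if n is odd, B_n = u(n)·((u(n)·λ₁ + u(n−1)·λ₂)·c₁ + (α·u(n+1)·λ₁ + u(n)·λ₂)·c₂). -/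

import Mathlib

noncomputable section

variable {K : Type*} [Field K] [CharZero K]

/-- The linear functional `x ↦ c 0 * x 0 + c 1 * x 1 + c 2 * x 2` on `K³`. -/
def lf (c : Fin 3 → K) : (Fin 3 → K) →ₗ[K] K :=
  c 0 • LinearMap.proj 0 + c 1 • LinearMap.proj 1 + c 2 • LinearMap.proj 2

/-- `s₁ : x ↦ x − (2x₁ − α x₂ − β x₃)·a₁` where `a₁ = Pi.single 0 1`. -/
def s1 (α β : K) : Module.End K (Fin 3 → K) :=
  LinearMap.id - (lf ![2, -α, -β]).smulRight (Pi.single 0 1)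

/-- `s₂ : x ↦ x − (−x₁ + 2x₂ − l·x₃)·a₂`. -/
def s2 (l : K) : Module.End K (Fin 3 → K) :=
  LinearMap.id - (lf ![-1, 2, -l]).smulRight (Pi.single 1 1)

/-- `s₃ : x ↦ x − (−x₁ − m·x₂ + 2x₃)·a₃`. -/
def s3 (m : K) : Module.End K (Fin 3 → K) :=
  LinearMap.id - (lf ![-1, -m, 2]).smulRight (Pi.single 2 1)

/-- `b = b₁ = (4−γ)a₁ + (l+2)a₂ + (m+2)a₃`, with `γ = l·m`. -/
def bvec (l m : K) : Fin 3 → K := ![4 - l * m, l + 2, m + 2]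

/-- `b₂ = (2α+βm)a₁ + (4−β)a₂ + (α+2m)a₃`. -/
def b2vec (α β l m : K) : Fin 3 → K := ![2*α + β*m, 4 - β, α + 2*m]

/-- `b₃ = (2β+αl)a₁ + (β+2l)a₂ + (4−α)a₃`. -/
def b3vec (α β l m : K) : Fin 3 → K := ![2*β + α*l, β + 2*l, 4 - α]

/-- `τ(λ,μ) : a₁ ↦ a₁ + ω·b, a₂ ↦ a₂ + λ·b, a₃ ↦ a₃ + μ·b`,
where `ω = −(λ(l+2) + μ(m+2))/(4−γ)`. -/
def tau (l m lam mu : K) : Module.End K (Fin 3 → K) :=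
  LinearMap.id +
    (lf ![-(lam*(l+2) + mu*(m+2))/(4 - l*m), lam, mu]).smulRight (bvec l m)

/-- `τ` applied to a vector `(λ,μ) ∈ K²`. -/
def tauv (l m : K) (v : K × K) : Module.End K (Fin 3 → K) := tau l m v.1 v.2

def c1 (α β : K) : K × K := (α, β)
def c2 (l : K) : K × K := (-2, l)
def c3 (m : K) : K × K := (m, -2)

/-- `z₁ : a₁ ↦ −a₁ + (2/(4−γ))·b, a₂ ↦ −a₂, a₃ ↦ −a₃`. -/
def z1 (l m : K) : Module.End K (Fin 3 → K) :=
  -LinearMap.id + (lf ![2/(4 - l*m), 0, 0]).smulRight (bvec l m)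

/-- `z₂ : a₂ ↦ −a₂ + (2/(l+2))·b, a₁ ↦ −a₁, a₃ ↦ −a₃`. -/
def z2 (l m : K) : Module.End K (Fin 3 → K) :=
  -LinearMap.id + (lf ![0, 2/(l+2), 0]).smulRight (bvec l m)

/-- `z₃ : a₃ ↦ −a₃ + (2/(m+2))·b, a₁ ↦ −a₁, a₂ ↦ −a₂`. -/
def z3 (l m : K) : Module.End K (Fin 3 → K) :=
  -LinearMap.id + (lf ![0, 0, 2/(m+2)]).smulRight (bvec l m)

/-- The linear functional `(λ,μ) ↦ c.1·λ + c.2·μ` on `K²`. -/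
def lf2 (c : K × K) : (K × K) →ₗ[K] K := c.1 • LinearMap.fst K K K + c.2 • LinearMap.snd K K K

/-- `σ₁(λ,μ) = (λ,μ) − ((λ(l+2)+μ(m+2))/(4−γ))·(α,β)`. -/
def sigma1 (α β l m : K) : Module.End K (K × K) :=
  LinearMap.id - (lf2 ((l+2)/(4 - l*m), (m+2)/(4 - l*m))).smulRight (α, β)

/-- `σ₂(λ,μ) = (λ,μ) + λ·(−2,l)`. -/
def sigma2 (l : K) : Module.End K (K × K) :=
  LinearMap.id + (LinearMap.fst K K K).smulRight ((-2 : K), l)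

/-- `σ₃(λ,μ) = (λ,μ) + μ·(m,−2)`. -/
def sigma3 (m : K) : Module.End K (K × K) :=
  LinearMap.id + (LinearMap.snd K K K).smulRight (m, (-2 : K))

/-- The sequence `u_x` : `u_x(0)=0, u_x(1)=u_x(2)=1, u_x(3)=x−1,
u_x(n+4) = (x−2)·u_x(n+2) − u_x(n)`. -/
def useq (x : K) : ℕ → K
  | 0 => 0
  | 1 => 1
  | 2 => 1
  | 3 => x - 1
  | (n+4) => (x - 2) * useq x (n+2) - useq x n


end

/-!
`τ(v)` is the transvection `x ↦ x + φ_v(x) • b` with `φ_v = tauForm l m v`, and `ω` is exactly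
what makes `φ_v(b) = 0`; hence `τ(v) τ(w) = τ(v + w)`. The reflection `s₂` fixes `b`, and so
does `s₁` because `Δ = 0`; for such `s` one has `τ(v) s = s τ(v')` with `φ_{v'} = φ_v ∘ s`,
which is `v' = σᵢ v`. Pushing `τ(Bₙ)` to the right through `s₁' s₂'` therefore gives the affine
recursion `Bₙ₊₁ = σ₂ (σ₁ Bₙ + λ₁ c₁) + λ₂ c₂`, `B₀ = 0`, which in the coordinates
`B = x c₁ + y c₂` reads `(x, y) ↦ (y - x + λ₁, α (y - x + λ₁) - y + λ₂)`. Its closed form is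
checked two steps at a time, using `u(2k+2) = u(2k+1) - u(2k)`, `u(2k+3) = α u(2k+2) - u(2k+1)`
and the invariance of the quadratic form `α X² - α X Y + Y²` along consecutive pairs of `u`.
-/

variable {K : Type*} [Field K]

open LinearMap

theorem LinearMap.transvection_mul_of_apply_eq {R V : Type*} [CommSemiring R] [AddCommMonoid V]
    [Module R V] (f : Module.Dual R V) {v : V} {s : Module.End R V} (hs : s v = v) :
    transvection f v * s = s * transvection (f ∘ₗ s) v := by
  ext x
  simp [transvection.apply, hs]

@[simp]
theorem lf_apply (c x : Fin 3 → K) : lf c x = c 0 * x 0 + c 1 * x 1 + c 2 * x 2 := by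
  simp [lf]

def tauForm (l m : K) (v : K × K) : Module.Dual K (Fin 3 → K) :=
  lf ![-(v.1 * (l + 2) + v.2 * (m + 2)) / (4 - l * m), v.1, v.2]

theorem tauv_eq_transvection (l m : K) (v : K × K) :
    tauv l m v = transvection (tauForm l m v) (bvec l m) :=
  LinearMap.ext fun _ => rfl

theorem tauForm_add (l m : K) (v w : K × K) :
    tauForm l m (v + w) = tauForm l m v + tauForm l m w := by
  refine LinearMap.ext fun x => ?_
  simp only [tauForm, LinearMap.add_apply, lf_apply, Prod.fst_add, Prod.snd_add,
    Matrix.cons_val_zero, Matrix.cons_val_one, Matrix.cons_val]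
  ring

theorem tauForm_zero (l m : K) : tauForm l m 0 = 0 := by
  ext x
  simp [tauForm]

-- In the form `m * l`, which is how `field_simp` normalises the denominator `4 - l * m`.
theorem four_sub_mul_ne_zero {l m : K} (hγ : l * m ≠ 4) : (4 : K) - m * l ≠ 0 := by
  rw [mul_comm]
  exact sub_ne_zero.mpr hγ.symm

theorem tauForm_bvec {l m : K} (hγ : l * m ≠ 4) (v : K × K) : tauForm l m v (bvec l m) = 0 := by
  have hD := four_sub_mul_ne_zero hγ
  simp only [tauForm, bvec, lf_apply, Matrix.cons_val_zero, Matrix.cons_val_one, Matrix.cons_val]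
  field_simp
  ring

theorem tauv_zero (l m : K) : tauv l m 0 = 1 := by
  rw [tauv_eq_transvection, tauForm_zero, transvection.of_left_eq_zero]
  rfl

theorem tauv_mul_tauv {l m : K} (hγ : l * m ≠ 4) (v w : K × K) :
    tauv l m v * tauv l m w = tauv l m (v + w) := by
  rw [tauv_eq_transvection, tauv_eq_transvection, tauv_eq_transvection, Module.End.mul_eq_comp,
    transvection.comp_of_right_eq (tauForm_bvec hγ v), tauForm_add]

theorem s1_bvec {α β l m : K} (hΔ : 8 - 2*α - 2*β - 2*(l*m) - (α*l + β*m) = 0) :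
    s1 α β (bvec l m) = bvec l m := by
  ext i
  fin_cases i <;> simp [s1, bvec]
  linear_combination hΔ

theorem s2_bvec (l m : K) : s2 l (bvec l m) = bvec l m := by
  ext i
  fin_cases i <;> simp [s2, bvec]
  ring

theorem tauForm_comp_s1 {α β l m : K} (hΔ : 8 - 2*α - 2*β - 2*(l*m) - (α*l + β*m) = 0)
    (hγ : l * m ≠ 4) (v : K × K) :
    tauForm l m v ∘ₗ s1 α β = tauForm l m (sigma1 α β l m v) := by
  have hD := four_sub_mul_ne_zero hγ
  refine LinearMap.ext fun x => ?_
  simp only [tauForm, s1, coe_comp, Function.comp_apply, LinearMap.sub_apply, id_coe, id_eq,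
    coe_smulRight, lf_apply, Matrix.cons_val_zero, Matrix.cons_val_one, Matrix.cons_val,
    Pi.sub_apply, Pi.smul_apply, Pi.single_eq_same, smul_eq_mul, ne_eq, one_ne_zero,
    not_false_eq_true, Pi.single_eq_of_ne, Fin.reduceEq, sigma1, lf2, LinearMap.add_apply,
    LinearMap.smul_apply, fst_apply, snd_apply, Prod.smul_mk, Prod.fst_sub, Prod.snd_sub]
  field_simp
  linear_combination (v.1 * (l + 2) + v.2 * (m + 2)) * x 0 * hΔ

theorem tauForm_comp_s2 {l m : K} (hγ : l * m ≠ 4) (v : K × K) :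
    tauForm l m v ∘ₗ s2 l = tauForm l m (sigma2 l v) := by
  have hD := four_sub_mul_ne_zero hγ
  refine LinearMap.ext fun x => ?_
  simp only [tauForm, s2, coe_comp, Function.comp_apply, LinearMap.sub_apply, id_coe, id_eq,
    coe_smulRight, lf_apply, Matrix.cons_val_zero, Matrix.cons_val_one, Matrix.cons_val,
    Pi.sub_apply, Pi.smul_apply, ne_eq, zero_ne_one, not_false_eq_true, Pi.single_eq_of_ne,
    smul_eq_mul, Pi.single_eq_same, Fin.reduceEq, sigma2, LinearMap.add_apply, fst_apply,
    Prod.smul_mk, Prod.fst_add, Prod.snd_add]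
  field_simp
  ring

theorem tauv_mul_s1 {α β l m : K} (hΔ : 8 - 2*α - 2*β - 2*(l*m) - (α*l + β*m) = 0)
    (hγ : l * m ≠ 4) (v : K × K) :
    tauv l m v * s1 α β = s1 α β * tauv l m (sigma1 α β l m v) := by
  rw [tauv_eq_transvection, tauv_eq_transvection, transvection_mul_of_apply_eq _ (s1_bvec hΔ),
    tauForm_comp_s1 hΔ hγ]

theorem tauv_mul_s2 {l m : K} (hγ : l * m ≠ 4) (v : K × K) :
    tauv l m v * s2 l = s2 l * tauv l m (sigma2 l v) := by
  rw [tauv_eq_transvection, tauv_eq_transvection, transvection_mul_of_apply_eq _ (s2_bvec l m),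
    tauForm_comp_s2 hγ]

theorem sigma1_c1 {α β l m : K} (hΔ : 8 - 2*α - 2*β - 2*(l*m) - (α*l + β*m) = 0)
    (hγ : l * m ≠ 4) : sigma1 α β l m (c1 α β) = -c1 α β := by
  have hD := four_sub_mul_ne_zero hγ
  simp only [sigma1, lf2, c1, LinearMap.sub_apply, id_coe, id_eq, coe_smulRight,
    LinearMap.add_apply, LinearMap.smul_apply, fst_apply, smul_eq_mul, snd_apply, Prod.smul_mk,
    Prod.mk_sub_mk, Prod.neg_mk, Prod.mk.injEq]
  constructor <;> field_simp
  · linear_combination α * hΔ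
  · linear_combination β * hΔ

theorem sigma1_c2 (α β : K) {l m : K} (hγ : l * m ≠ 4) :
    sigma1 α β l m (c2 l) = c1 α β + c2 l := by
  have hD := four_sub_mul_ne_zero hγ
  simp only [sigma1, lf2, c2, LinearMap.sub_apply, id_coe, id_eq, coe_smulRight,
    LinearMap.add_apply, LinearMap.smul_apply, fst_apply, smul_eq_mul, snd_apply, Prod.smul_mk,
    Prod.mk_sub_mk, c1, Prod.mk_add_mk, Prod.mk.injEq]
  constructor <;> field_simp <;> ring

theorem sigma2_c1 (α β l : K) : sigma2 l (c1 α β) = c1 α β + α • c2 l := by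
  simp [sigma2, c1, c2]

theorem sigma2_c2 (l : K) : sigma2 l (c2 l) = -c2 l := by
  ext <;> simp [sigma2, c2] <;> ring

def twistStep (α β l m : K) (a b v : K × K) : K × K := sigma2 l (sigma1 α β l m v + a) + b

theorem tauv_mul_twist {α β l m : K} (hΔ : 8 - 2*α - 2*β - 2*(l*m) - (α*l + β*m) = 0)
    (hγ : l * m ≠ 4) (a b v : K × K) :
    tauv l m v * ((s1 α β * tauv l m a) * (s2 l * tauv l m b))
      = (s1 α β * s2 l) * tauv l m (twistStep α β l m a b v) := by
  calc tauv l m v * ((s1 α β * tauv l m a) * (s2 l * tauv l m b))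
      = (tauv l m v * s1 α β) * tauv l m a * s2 l * tauv l m b := by simp only [mul_assoc]
    _ = s1 α β * (tauv l m (sigma1 α β l m v) * tauv l m a) * s2 l * tauv l m b := by
        rw [tauv_mul_s1 hΔ hγ]; simp only [mul_assoc]
    _ = s1 α β * (tauv l m (sigma1 α β l m v + a) * s2 l) * tauv l m b := by
        rw [tauv_mul_tauv hγ]; simp only [mul_assoc]
    _ = (s1 α β * s2 l) * (tauv l m (sigma2 l (sigma1 α β l m v + a)) * tauv l m b) := by
        rw [tauv_mul_s2 hγ]; simp only [mul_assoc]
    _ = (s1 α β * s2 l) * tauv l m (twistStep α β l m a b v) := by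
        rw [tauv_mul_tauv hγ, twistStep]

theorem twist_pow {α β l m : K} (hΔ : 8 - 2*α - 2*β - 2*(l*m) - (α*l + β*m) = 0)
    (hγ : l * m ≠ 4) (a b : K × K) (n : ℕ) :
    ((s1 α β * tauv l m a) * (s2 l * tauv l m b)) ^ n
      = (s1 α β * s2 l) ^ n * tauv l m ((twistStep α β l m a b)^[n] 0) := by
  induction n with
  | zero => rw [pow_zero, pow_zero, Function.iterate_zero_apply, tauv_zero, one_mul]
  | succ n ih =>
    rw [pow_succ, ih, mul_assoc, tauv_mul_twist hΔ hγ, ← mul_assoc, ← pow_succ,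
      Function.iterate_succ_apply']

def coordStep (α lam1 lam2 : K) (p : K × K) : K × K :=
  (p.2 - p.1 + lam1, α * (p.2 - p.1 + lam1) - p.2 + lam2)

theorem twistStep_coords {α β l m : K} (hΔ : 8 - 2*α - 2*β - 2*(l*m) - (α*l + β*m) = 0)
    (hγ : l * m ≠ 4) (lam1 lam2 : K) (p : K × K) :
    twistStep α β l m (lam1 • c1 α β) (lam2 • c2 l) (p.1 • c1 α β + p.2 • c2 l)
      = (coordStep α lam1 lam2 p).1 • c1 α β + (coordStep α lam1 lam2 p).2 • c2 l := by
  simp only [twistStep, coordStep, map_add, map_smul, map_neg, sigma1_c1 hΔ hγ, sigma1_c2 α β hγ,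
    sigma2_c1, sigma2_c2]
  module

theorem iterate_twistStep {α β l m : K} (hΔ : 8 - 2*α - 2*β - 2*(l*m) - (α*l + β*m) = 0)
    (hγ : l * m ≠ 4) (lam1 lam2 : K) (n : ℕ) :
    (twistStep α β l m (lam1 • c1 α β) (lam2 • c2 l))^[n] 0
      = ((coordStep α lam1 lam2)^[n] 0).1 • c1 α β
        + ((coordStep α lam1 lam2)^[n] 0).2 • c2 l := by
  have h : Function.Semiconj (fun p : K × K => p.1 • c1 α β + p.2 • c2 l)
      (coordStep α lam1 lam2) (twistStep α β l m (lam1 • c1 α β) (lam2 • c2 l)) :=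
    fun p => (twistStep_coords hΔ hγ lam1 lam2 p).symm
  simpa using (h.iterate_right n 0).symm

theorem useq_two_mul_add_two_and_three (x : K) (k : ℕ) :
    useq x (2*k+2) = useq x (2*k+1) - useq x (2*k) ∧
      useq x (2*k+3) = x * useq x (2*k+2) - useq x (2*k+1) := by
  induction k with
  | zero => constructor <;> simp [useq]
  | succ k ih =>
    obtain ⟨h2, h3⟩ := ih
    have h4 : useq x (2*k+4) = (x - 2) * useq x (2*k+2) - useq x (2*k) := rfl
    have h5 : useq x (2*k+5) = (x - 2) * useq x (2*k+3) - useq x (2*k+1) := rfl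
    have h4' : useq x (2*k+4) = useq x (2*k+3) - useq x (2*k+2) := by
      linear_combination h4 - h3 - h2
    exact ⟨h4', by linear_combination h5 - x * h4' - h3⟩

theorem useq_cassini (x : K) (k : ℕ) :
    x * useq x (2*k+2) ^ 2 - x * useq x (2*k+1) * useq x (2*k+2) + useq x (2*k+1) ^ 2 = 1 ∧
      useq x (2*k+3) ^ 2 - x * useq x (2*k+2) * useq x (2*k+3) + x * useq x (2*k+2) ^ 2 = 1 := by
  induction k with
  | zero => constructor <;> simp [useq]; ring
  | succ k ih =>
    have h4 := (useq_two_mul_add_two_and_three x (k+1)).1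
    have h5 := (useq_two_mul_add_two_and_three x (k+1)).2
    have hQ : x * useq x (2*k+4) ^ 2 - x * useq x (2*k+3) * useq x (2*k+4)
        + useq x (2*k+3) ^ 2 = 1 := by
      linear_combination ih.2 + x * (useq x (2*k+4) - useq x (2*k+2)) * h4
    exact ⟨hQ, by linear_combination hQ + (useq x (2*k+5) - useq x (2*k+3)) * h5⟩

def oddCoords (α lam1 lam2 : K) (n : ℕ) : K × K :=
  (useq α n * (useq α n * lam1 + useq α (n-1) * lam2),
    useq α n * (α * useq α (n+1) * lam1 + useq α n * lam2))

def evenCoords (α lam1 lam2 : K) (n : ℕ) : K × K :=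
  (useq α n * (α * useq α n * lam1 + useq α (n-1) * lam2),
    useq α n * (α * (useq α (n+1) * lam1 + useq α n * lam2)))

theorem coordStep_oddCoords (α lam1 lam2 : K) (k : ℕ) :
    coordStep α lam1 lam2 (oddCoords α lam1 lam2 (2*k+1)) = evenCoords α lam1 lam2 (2*k+2) := by
  obtain ⟨hc, hd⟩ := useq_two_mul_add_two_and_three α k
  have hQ := (useq_cassini α k).1
  simp only [coordStep, oddCoords, evenCoords, show 2*k+1-1 = 2*k from rfl, show 2*k+2-1 = 2*k+1
    from rfl, show 2*k+1+1 = 2*k+2 from rfl, show 2*k+2+1 = 2*k+3 from rfl, Prod.mk.injEq]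
  constructor
  · linear_combination (-lam1) * hQ - lam2 * useq α (2*k+1) * hc
  · linear_combination (-lam1) * (α * hQ + α * useq α (2*k+2) * hd)
      - lam2 * (hQ + α * useq α (2*k+1) * hc)

theorem coordStep_evenCoords (α lam1 lam2 : K) (k : ℕ) :
    coordStep α lam1 lam2 (evenCoords α lam1 lam2 (2*k)) = oddCoords α lam1 lam2 (2*k+1) := by
  rcases k with _ | k
  · simp [coordStep, evenCoords, oddCoords, useq]
  have hd := (useq_two_mul_add_two_and_three α k).2
  have he : useq α (2*k+4) = useq α (2*k+3) - useq α (2*k+2) :=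
    (useq_two_mul_add_two_and_three α (k+1)).1
  have hQ := (useq_cassini α k).2
  simp only [coordStep, oddCoords, evenCoords, show 2*(k+1) = 2*k+2 from rfl, show 2*k+2-1 = 2*k+1
    from rfl, show 2*k+2+1 = 2*k+3 from rfl, show 2*k+2+1-1 = 2*k+2 from rfl, show 2*k+2+1+1 =
    2*k+4 from rfl, Prod.mk.injEq]
  constructor
  · linear_combination (-lam1) * hQ - lam2 * useq α (2*k+2) * hd
  · linear_combination (-lam1) * (α * hQ + α * useq α (2*k+3) * he)
      - lam2 * (hQ + α * useq α (2*k+2) * hd)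

theorem iterate_coordStep_two_mul (α lam1 lam2 : K) (k : ℕ) :
    (coordStep α lam1 lam2)^[2*k] 0 = evenCoords α lam1 lam2 (2*k) := by
  induction k with
  | zero => simp [evenCoords, useq]; rfl
  | succ k ih =>
    rw [show 2*(k+1) = 2*k+1+1 from rfl, Function.iterate_succ_apply',
      Function.iterate_succ_apply', ih, coordStep_evenCoords, coordStep_oddCoords]

theorem iterate_coordStep_two_mul_add_one (α lam1 lam2 : K) (k : ℕ) :
    (coordStep α lam1 lam2)^[2*k+1] 0 = oddCoords α lam1 lam2 (2*k+1) := by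
  rw [Function.iterate_succ_apply', iterate_coordStep_two_mul, coordStep_evenCoords]

variable [CharZero K]

theorem stmt11_general (α β l m : K)
    (hΔ : 8 - 2*α - 2*β - 2*(l*m) - (α*l + β*m) = 0) (hγ : l*m ≠ 4)
    (lam1 lam2 : K) (n : ℕ) :
    (Even n →
      ((s1 α β * tauv l m (lam1 • c1 α β)) * (s2 l * tauv l m (lam2 • c2 l)))^n
        = (s1 α β * s2 l)^n *
            tauv l m (useq α n •
              ((α * useq α n * lam1 + useq α (n-1) * lam2) • c1 α β
                + (α * (useq α (n+1) * lam1 + useq α n * lam2)) • c2 l)) ) ∧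
    (Odd n →
      ((s1 α β * tauv l m (lam1 • c1 α β)) * (s2 l * tauv l m (lam2 • c2 l)))^n
        = (s1 α β * s2 l)^n *
            tauv l m (useq α n •
              ((useq α n * lam1 + useq α (n-1) * lam2) • c1 α β
                + (α * useq α (n+1) * lam1 + useq α n * lam2) • c2 l)) ) := by
  rw [twist_pow hΔ hγ, iterate_twistStep hΔ hγ]
  refine ⟨fun hn => ?_, fun hn => ?_⟩
  · obtain ⟨k, rfl⟩ := hn.two_dvd
    rw [iterate_coordStep_two_mul, evenCoords, smul_add, smul_smul, smul_smul]
  · obtain ⟨k, rfl⟩ := hn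
    rw [iterate_coordStep_two_mul_add_one, oddCoords, smul_add, smul_smul, smul_smul]

/-- Proposition 3: with `Δ = 0`, `γ ≠ 4`, `s₁' = s₁ ∘ τ(λ₁c₁)`,
`s₂' = s₂ ∘ τ(λ₂c₂)` and `u = u_α`, for all `n ≥ 1`:
`(s₁'s₂')ⁿ = (s₁s₂)ⁿ ∘ τ(Bₙ)` where for even `n`
`Bₙ = u(n)((αu(n)λ₁ + u(n−1)λ₂)c₁ + α(u(n+1)λ₁ + u(n)λ₂)c₂)` and for odd `n`
`Bₙ = u(n)((u(n)λ₁ + u(n−1)λ₂)c₁ + (αu(n+1)λ₁ + u(n)λ₂)c₂)`. -/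
theorem stmt11 (α β l m : K)
    (hΔ : 8 - 2*α - 2*β - 2*(l*m) - (α*l + β*m) = 0) (hγ : l*m ≠ 4)
    (lam1 lam2 : K) (n : ℕ) (hn : 1 ≤ n) :
    (Even n →
      ((s1 α β * tauv l m (lam1 • c1 α β)) * (s2 l * tauv l m (lam2 • c2 l)))^n
        = (s1 α β * s2 l)^n *
            tauv l m (useq α n •
              ((α * useq α n * lam1 + useq α (n-1) * lam2) • c1 α β
                + (α * (useq α (n+1) * lam1 + useq α n * lam2)) • c2 l)) ) ∧
    (Odd n →
      ((s1 α β * tauv l m (lam1 • c1 α β)) * (s2 l * tauv l m (lam2 • c2 l)))^n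
        = (s1 α β * s2 l)^n *
            tauv l m (useq α n •
              ((useq α n * lam1 + useq α (n-1) * lam2) • c1 α β
                + (α * useq α (n+1) * lam1 + useq α n * lam2) • c2 l)) ) :=
  stmt11_general α β l m hΔ hγ lam1 lam2 n
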